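/- arXiv:1903.00652 — 6 statements merged into one kernel-verified Lean document; each statement's English description precedes it below -/
import Mathlib

section
/- Let R be a commutative ring and let 𝔲 be a set of derivations of R. For an integer i define the subset G_i ⊆ R by: G_i = {0} for i < 0, and for i ≥ 0, G_i = {x ∈ R : D_{i+1}(D_i(⋯(D_1(x))⋯)) = 0 for every choice of derivations D_1, …, D_{i+1} ∈ 𝔲}. Then the filtration (G_i) is multiplicative: for all integers i, j and all x ∈ G_i, y ∈ G_j, the product xy lies in G_{i+j}. -/
/-- Apply a list of operators to an element, the head of the list being applied first. -/
def iterApp {R : Type*} : List (R → R) → R → R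
  | [], x => x
  | D :: Ds, x => iterApp Ds (D x)

/-- A derivation of a commutative ring: an additive map satisfying the Leibniz rule. -/
def IsDerivation {R : Type*} [CommRing R] (D : R → R) : Prop :=
  (∀ a b : R, D (a + b) = D a + D b) ∧ (∀ a b : R, D (a * b) = D a * b + a * D b)

/-- The Socle filtration associated to a set `u` of derivations: `G i = {0}` for `i < 0`, and
for `i ≥ 0`, `G i` consists of the elements annihilated by every composite of `i + 1`
derivations from `u`. -/
def SocleG {R : Type*} [CommRing R] (u : Set (R → R)) (i : ℤ) : Set R :=
  if i < 0 then {0}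
  else {x | ∀ Ds : List (R → R), (∀ D ∈ Ds, D ∈ u) → Ds.length = i.toNat + 1 →
    iterApp Ds x = 0}

lemma deriv_map_zero {R : Type*} [CommRing R] {D : R → R} (h : IsDerivation D) : D 0 = 0 := by
  have h0 := h.1 0 0
  simp only [add_zero] at h0
  exact (left_eq_add.mp h0)

lemma iterApp_zero {R : Type*} [CommRing R] {Ds : List (R → R)}
    (h : ∀ D ∈ Ds, IsDerivation D) : iterApp Ds (0 : R) = 0 := by
  induction Ds with
  | nil => rfl
  | cons D Ds ih =>
    show iterApp Ds (D 0) = 0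
    rw [deriv_map_zero (h D (by simp))]
    exact ih fun D hD => h D (by simp [hD])

lemma iterApp_add {R : Type*} [CommRing R] {Ds : List (R → R)}
    (h : ∀ D ∈ Ds, IsDerivation D) (p q : R) :
    iterApp Ds (p + q) = iterApp Ds p + iterApp Ds q := by
  induction Ds generalizing p q with
  | nil => rfl
  | cons D Ds ih =>
    show iterApp Ds (D (p + q)) = iterApp Ds (D p) + iterApp Ds (D q)
    rw [(h D (by simp)).1 p q]
    exact ih (fun D hD => h D (by simp [hD])) _ _

lemma socle_key {R : Type*} [CommRing R] (u : Set (R → R))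
    (hu : ∀ D ∈ u, IsDerivation D) :
    ∀ (Ds : List (R → R)), (∀ D ∈ Ds, D ∈ u) → ∀ a b : ℕ, ∀ x y : R,
    a + b ≤ Ds.length + 1 →
    (∀ Es : List (R → R), (∀ D ∈ Es, D ∈ u) → Es.length = a → iterApp Es x = 0) →
    (∀ Es : List (R → R), (∀ D ∈ Es, D ∈ u) → Es.length = b → iterApp Es y = 0) →
    iterApp Ds (x * y) = 0 := by
  intro Ds
  have hud : ∀ (L : List (R → R)), (∀ D ∈ L, D ∈ u) → ∀ D ∈ L, IsDerivation D :=
    fun L hL D hD => hu D (hL D hD)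
  induction Ds with
  | nil =>
    intro _ a b x y hab hx hy
    simp only [List.length_nil] at hab
    show x * y = 0
    rcases Nat.le_one_iff_eq_zero_or_eq_one.mp hab with h | h
    · have ha : a = 0 := by omega
      have := hx [] (by simp) (by simp [ha])
      show x * y = 0
      rw [show x = 0 from this, zero_mul]
    · rcases Nat.add_eq_one_iff.mp h with ⟨ha, hb⟩ | ⟨ha, hb⟩
      · have := hx [] (by simp) (by simp [ha])
        rw [show x = 0 from this, zero_mul]
      · have := hy [] (by simp) (by simp [hb])
        rw [show y = 0 from this, mul_zero]
  | cons D Ds ih =>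
    intro hDs a b x y hab hx hy
    have hD : D ∈ u := hDs D (by simp)
    have hDs' : ∀ E ∈ Ds, E ∈ u := fun E hE => hDs E (by simp [hE])
    rcases Nat.eq_zero_or_pos a with ha | ha
    · have hx0 : x = 0 := hx [] (by simp) (by simp [ha])
      rw [hx0, zero_mul]
      exact iterApp_zero (hud _ hDs)
    rcases Nat.eq_zero_or_pos b with hb | hb
    · have hy0 : y = 0 := hy [] (by simp) (by simp [hb])
      rw [hy0, mul_zero]
      exact iterApp_zero (hud _ hDs)
    show iterApp Ds (D (x * y)) = 0
    rw [(hu D hD).2 x y, iterApp_add (hud _ hDs')]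
    have h1 : iterApp Ds (D x * y) = 0 := by
      apply ih hDs' (a - 1) b (D x) y (by simp at hab; omega)
      · intro Es hEs hlen
        have : iterApp (D :: Es) x = 0 := by
          apply hx (D :: Es)
          · intro E hE
            rcases List.mem_cons.mp hE with h | h
            · rw [h]; exact hD
            · exact hEs E h
          · simp [hlen]; omega
        exact this
      · exact hy
    have h2 : iterApp Ds (x * D y) = 0 := by
      apply ih hDs' a (b - 1) x (D y) (by simp at hab; omega)
      · exact hx
      · intro Es hEs hlen
        have : iterApp (D :: Es) y = 0 := by
          apply hy (D :: Es)
          · intro E hE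
            rcases List.mem_cons.mp hE with h | h
            · rw [h]; exact hD
            · exact hEs E h
          · simp [hlen]; omega
        exact this
    rw [h1, h2, add_zero]

/-- The Socle filtration is multiplicative: `G i * G j ⊆ G (i + j)`. -/
theorem socle_multiplicative {R : Type*} [CommRing R] (u : Set (R → R))
    (hu : ∀ D ∈ u, IsDerivation D) (i j : ℤ) (x y : R)
    (hx : x ∈ SocleG u i) (hy : y ∈ SocleG u j) :
    x * y ∈ SocleG u (i + j) := by
  have hzero : (0 : R) ∈ SocleG u (i + j) := by
    unfold SocleG
    split
    · rfl
    · intro Ds hDs _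
      exact iterApp_zero (fun D hD => hu D (hDs D hD))
  by_cases hi : i < 0
  · have hx0 : x = 0 := by simpa [SocleG, hi] using hx
    rw [hx0, zero_mul]; exact hzero
  by_cases hj : j < 0
  · have hy0 : y = 0 := by simpa [SocleG, hj] using hy
    rw [hy0, mul_zero]; exact hzero
  · have hij : ¬ (i + j < 0) := by omega
    simp only [SocleG, if_neg hi] at hx
    simp only [SocleG, if_neg hj] at hy
    simp only [SocleG, if_neg hij]
    intro Ds hDs hlen
    apply socle_key u hu Ds hDs (i.toNat + 1) (j.toNat + 1) x y
    · rw [hlen]; omega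
    · exact hx
    · exact hy
end

section
/- Let R be an integral domain of characteristic zero and 𝔲 a set of derivations of R, with filtration G_i = {x ∈ R : every composite D_{i+1} ∘ ⋯ ∘ D_1 of i+1 derivations from 𝔲 annihilates x} for i ≥ 0, and assume that every element of R lies in some G_i. For x ≠ 0 let ι(x) be the least i ≥ 0 with x ∈ G_i. Then ι is additive: for all nonzero x, y ∈ R, ι(x·y) = ι(x) + ι(y). -/
/-- For `i ≥ 0`, the `i`-th Socle piece: elements annihilated by every composite of
`i + 1` derivations from `u`. -/
def SocleGNat {R : Type*} [CommRing R] (u : Set (R → R)) (i : ℕ) : Set R :=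
  {x | ∀ Ds : List (R → R), (∀ D ∈ Ds, D ∈ u) → Ds.length = i + 1 → iterApp Ds x = 0}

/-- `iota u x` is the least `i ≥ 0` with `x ∈ G i`. -/
noncomputable def iota {R : Type*} [CommRing R] (u : Set (R → R)) (x : R) : ℕ :=
  sInf {i : ℕ | x ∈ SocleGNat u i}

namespace List

variable {α : Type*}

/-- The splittings of a word into two complementary subwords, one for each choice of the
positions that go to the first subword. -/
def unshuffles : List α → List (List α × List α)
  | [] => [([], [])]
  | c :: w =>
    (w.unshuffles.map fun p => (c :: p.1, p.2)) ++ (w.unshuffles.map fun p => (p.1, c :: p.2))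

@[simp]
theorem mem_unshuffles_nil {r s : List α} :
    (r, s) ∈ ([] : List α).unshuffles ↔ r = [] ∧ s = [] := by
  simp [unshuffles]

theorem mem_unshuffles_cons {c : α} {w r s : List α} :
    (r, s) ∈ (c :: w).unshuffles ↔
      (∃ r₀, r = c :: r₀ ∧ (r₀, s) ∈ w.unshuffles) ∨
        ∃ s₀, s = c :: s₀ ∧ (r, s₀) ∈ w.unshuffles := by
  simp only [unshuffles, mem_append, mem_map, Prod.exists, Prod.mk.injEq]
  constructor
  · rintro (⟨r₀, s₀, h, rfl, rfl⟩ | ⟨r₀, s₀, h, rfl, rfl⟩)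
    exacts [Or.inl ⟨r₀, rfl, h⟩, Or.inr ⟨s₀, rfl, h⟩]
  · rintro (⟨r₀, rfl, h⟩ | ⟨s₀, rfl, h⟩)
    exacts [Or.inl ⟨r₀, s, h, rfl, rfl⟩, Or.inr ⟨r, s₀, h, rfl, rfl⟩]

theorem cons_left_mem_unshuffles_cons {c : α} {w r s : List α} (h : (r, s) ∈ w.unshuffles) :
    (c :: r, s) ∈ (c :: w).unshuffles :=
  mem_unshuffles_cons.2 (Or.inl ⟨r, rfl, h⟩)

theorem cons_right_mem_unshuffles_cons {c : α} {w r s : List α} (h : (r, s) ∈ w.unshuffles) :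
    (r, c :: s) ∈ (c :: w).unshuffles :=
  mem_unshuffles_cons.2 (Or.inr ⟨s, rfl, h⟩)

theorem perm_of_mem_unshuffles {w r s : List α} (h : (r, s) ∈ w.unshuffles) : r ++ s ~ w := by
  induction w generalizing r s with
  | nil => obtain ⟨rfl, rfl⟩ := mem_unshuffles_nil.1 h; rfl
  | cons c w ih =>
    rcases mem_unshuffles_cons.1 h with ⟨r₀, rfl, h₀⟩ | ⟨s₀, rfl, h₀⟩
    · exact (ih h₀).cons c
    · exact perm_middle.trans ((ih h₀).cons c)

theorem append_mem_unshuffles (r s : List α) : (r, s) ∈ (r ++ s).unshuffles := by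
  induction r with
  | nil =>
    induction s with
    | nil => simp
    | cons c s ih => exact cons_right_mem_unshuffles_cons ih
  | cons c r ih => exact cons_left_mem_unshuffles_cons ih

section LinearOrder

variable [LinearOrder α]

theorem exists_forall_not_lt_of_length_eq [WellFoundedLT α] {S : Set (List α)} {n : ℕ}
    (hS : ∀ w ∈ S, w.length = n) (hne : S.Nonempty) : ∃ w ∈ S, ∀ w' ∈ S, ¬ w' < w := by
  induction n generalizing S with
  | zero =>
    obtain ⟨w, hw⟩ := hne
    refine ⟨w, hw, fun w' hw' => ?_⟩
    rw [length_eq_zero_iff.1 (hS w hw), length_eq_zero_iff.1 (hS w' hw')]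
    exact irrefl _
  | succ n ih =>
    have hheads : {a | ∃ t, a :: t ∈ S}.Nonempty := by
      obtain ⟨w, hw⟩ := hne
      obtain ⟨a, t, rfl⟩ := exists_cons_of_length_eq_add_one (hS w hw)
      exact ⟨a, t, hw⟩
    set a := wellFounded_lt.min _ hheads
    obtain ⟨t, ht, htmin⟩ := ih (S := {t | a :: t ∈ S})
      (fun t ht => by simpa using hS _ ht) (wellFounded_lt.min_mem _ hheads)
    refine ⟨a :: t, ht, fun w' hw' => ?_⟩
    obtain ⟨b, t', rfl⟩ := exists_cons_of_length_eq_add_one (hS w' hw')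
    rw [cons_lt_cons_iff, not_or, not_and]
    exact ⟨wellFounded_lt.not_lt_min {a | ∃ t, a :: t ∈ S} (x := b) ⟨t', hw'⟩,
      by rintro rfl; exact htmin t' hw'⟩

/-- The interleaving `w'` puts `p` and `q` in the positions that `r` and `s` occupy in `w`. -/
theorem eq_and_eq_or_exists_lt_of_mem_unshuffles {w r s p q : List α}
    (hw : (r, s) ∈ w.unshuffles) (hr : r.length = p.length) (hs : s.length = q.length)
    (hpr : ¬ r < p) (hqs : ¬ s < q) :
    r = p ∧ s = q ∨ ∃ w', (p, q) ∈ w'.unshuffles ∧ w' < w := by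
  induction w generalizing r s p q with
  | nil =>
    obtain ⟨rfl, rfl⟩ := mem_unshuffles_nil.1 hw
    exact Or.inl ⟨(length_eq_zero_iff.1 hr.symm).symm, (length_eq_zero_iff.1 hs.symm).symm⟩
  | cons c w ih =>
    rcases mem_unshuffles_cons.1 hw with ⟨r₀, rfl, hw₀⟩ | ⟨s₀, rfl, hw₀⟩
    · obtain ⟨a, p₀, rfl⟩ := exists_cons_of_length_eq_add_one hr.symm
      rw [cons_lt_cons_iff, not_or, not_and] at hpr
      rcases (not_lt.1 hpr.1).lt_or_eq with hac | rfl
      · exact Or.inr ⟨a :: (p₀ ++ q), cons_left_mem_unshuffles_cons (append_mem_unshuffles _ _),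
          cons_lt_cons_iff.2 (Or.inl hac)⟩
      · rcases ih hw₀ (by simpa using hr) hs (hpr.2 rfl) hqs with ⟨rfl, rfl⟩ | ⟨w', hw', hlt⟩
        · exact Or.inl ⟨rfl, rfl⟩
        · exact Or.inr ⟨a :: w', cons_left_mem_unshuffles_cons hw',
            cons_lt_cons_iff.2 (Or.inr ⟨rfl, hlt⟩)⟩
    · obtain ⟨b, q₀, rfl⟩ := exists_cons_of_length_eq_add_one hs.symm
      rw [cons_lt_cons_iff, not_or, not_and] at hqs
      rcases (not_lt.1 hqs.1).lt_or_eq with hbc | rfl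
      · exact Or.inr ⟨b :: (p ++ q₀), cons_right_mem_unshuffles_cons (append_mem_unshuffles _ _),
          cons_lt_cons_iff.2 (Or.inl hbc)⟩
      · rcases ih hw₀ hr (by simpa using hs) hpr (hqs.2 rfl) with ⟨rfl, rfl⟩ | ⟨w', hw', hlt⟩
        · exact Or.inl ⟨rfl, rfl⟩
        · exact Or.inr ⟨b :: w', cons_right_mem_unshuffles_cons hw',
            cons_lt_cons_iff.2 (Or.inr ⟨rfl, hlt⟩)⟩

end LinearOrder

theorem sum_ne_zero_of_forall_eq_zero_or_eq {M : Type*} [AddCommMonoid M] [IsAddTorsionFree M]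
    {l : List M} {c : M} (hc : c ≠ 0) (hcl : c ∈ l) (h : ∀ t ∈ l, t = 0 ∨ t = c) : l.sum ≠ 0 := by
  classical
  have hsum : l.sum = l.count c • c := by
    clear hcl
    induction l with
    | nil => simp
    | cons t l ih =>
      have ih' := ih fun s hs => h s (mem_cons_of_mem _ hs)
      rcases h t mem_cons_self with rfl | rfl
      · simp [ih', Ne.symm hc]
      · simp [ih', succ_nsmul']
  rw [hsum]
  exact smul_ne_zero (count_pos_iff.2 hcl).ne' hc

end List

section ShuffleProduct

variable {α R : Type*} [Semiring R]

def shuffleProd (φ ψ : List α → R) (w : List α) : R :=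
  (w.unshuffles.map fun p => φ p.1 * ψ p.2).sum

theorem shuffleProd_nil (φ ψ : List α → R) : shuffleProd φ ψ [] = φ [] * ψ [] := by
  simp [shuffleProd, List.unshuffles]

theorem shuffleProd_cons (φ ψ : List α → R) (c : α) (w : List α) :
    shuffleProd φ ψ (c :: w) =
      shuffleProd (fun v => φ (c :: v)) ψ w + shuffleProd φ (fun v => ψ (c :: v)) w := by
  simp [shuffleProd, List.unshuffles, Function.comp_def]

theorem shuffleProd_eq_zero_of_lt_length {φ ψ : List α → R} {i j : ℕ}
    (hφ : ∀ w : List α, i < w.length → φ w = 0) (hψ : ∀ w : List α, j < w.length → ψ w = 0)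
    {w : List α} (hw : i + j < w.length) : shuffleProd φ ψ w = 0 := by
  refine List.sum_eq_zero fun t ht => ?_
  obtain ⟨⟨r, s⟩, hrs, rfl⟩ := List.mem_map.1 ht
  have hlen := (List.perm_of_mem_unshuffles hrs).length_eq
  rw [List.length_append] at hlen
  rcases lt_or_ge i r.length with hr | hr
  · rw [hφ r hr, zero_mul]
  · rw [hψ s (by omega), mul_zero]

theorem exists_shuffleProd_ne_zero [LinearOrder α] [WellFoundedLT α] [NoZeroDivisors R]
    [IsAddTorsionFree R] {φ ψ : List α → R} {i j : ℕ}
    (hφ : ∀ w : List α, i < w.length → φ w = 0) (hψ : ∀ w : List α, j < w.length → ψ w = 0)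
    (hφ' : ∃ w : List α, w.length = i ∧ φ w ≠ 0) (hψ' : ∃ w : List α, w.length = j ∧ ψ w ≠ 0) :
    ∃ w : List α, w.length = i + j ∧ shuffleProd φ ψ w ≠ 0 := by
  obtain ⟨p, ⟨hp, hφp⟩, hpmin⟩ := List.exists_forall_not_lt_of_length_eq
    (S := {w | w.length = i ∧ φ w ≠ 0}) (fun _ h => h.1) hφ'
  obtain ⟨q, ⟨hq, hψq⟩, hqmin⟩ := List.exists_forall_not_lt_of_length_eq
    (S := {w | w.length = j ∧ ψ w ≠ 0}) (fun _ h => h.1) hψ'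
  have hlen : ∀ {w r s : List α}, (r, s) ∈ w.unshuffles → r.length + s.length = w.length :=
    fun h => by rw [← List.length_append, (List.perm_of_mem_unshuffles h).length_eq]
  obtain ⟨w, hw, hwmin⟩ := List.exists_forall_not_lt_of_length_eq
    (S := {w | (p, q) ∈ w.unshuffles}) (fun _ h => by rw [← hlen h, hp, hq])
    ⟨_, List.append_mem_unshuffles p q⟩
  refine ⟨w, by rw [← hlen hw, hp, hq], List.sum_ne_zero_of_forall_eq_zero_or_eq
    (mul_ne_zero hφp hψq) (List.mem_map_of_mem hw) fun t ht => ?_⟩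
  obtain ⟨⟨r, s⟩, hrs, rfl⟩ := List.mem_map.1 ht
  by_cases hφr : φ r = 0
  · exact Or.inl (by rw [hφr, zero_mul])
  by_cases hψs : ψ s = 0
  · exact Or.inl (by rw [hψs, mul_zero])
  have hri : r.length ≤ i := not_lt.1 (mt (hφ r) hφr)
  have hsj : s.length ≤ j := not_lt.1 (mt (hψ s) hψs)
  have hr : r.length = i := by have := hlen hrs; have := hlen hw; omega
  have hs : s.length = j := by have := hlen hrs; have := hlen hw; omega
  rcases List.eq_and_eq_or_exists_lt_of_mem_unshuffles hrs (hr.trans hp.symm) (hs.trans hq.symm)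
      (hpmin r ⟨hr, hφr⟩) (hqmin s ⟨hs, hψs⟩) with ⟨rfl, rfl⟩ | ⟨w', hw', hlt⟩
  · exact Or.inr rfl
  · exact absurd hlt (hwmin w' hw')

end ShuffleProduct

theorem iterApp_append {R : Type*} (l₁ l₂ : List (R → R)) (x : R) :
    iterApp (l₁ ++ l₂) x = iterApp l₂ (iterApp l₁ x) := by
  induction l₁ generalizing x with
  | nil => rfl
  | cons D l ih => exact ih (D x)

section Derivations

variable {R : Type*} [CommRing R]

theorem IsDerivation.map_zero {D : R → R} (hD : IsDerivation D) : D 0 = 0 := by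
  simpa using hD.1 0 0

variable {α : Type*} {f : α → R → R} (hf : ∀ a, IsDerivation (f a))
include hf

theorem iterApp_map_zero (w : List α) : iterApp (w.map f) 0 = 0 := by
  induction w with
  | nil => rfl
  | cons c w ih => simpa [iterApp, (hf c).map_zero] using ih

theorem iterApp_map_add (w : List α) (x y : R) :
    iterApp (w.map f) (x + y) = iterApp (w.map f) x + iterApp (w.map f) y := by
  induction w generalizing x y with
  | nil => rfl
  | cons c w ih => simp only [List.map_cons, iterApp, (hf c).1, ih]

theorem iterApp_map_mul (w : List α) (x y : R) :
    iterApp (w.map f) (x * y) =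
      shuffleProd (fun v => iterApp (v.map f) x) (fun v => iterApp (v.map f) y) w := by
  induction w generalizing x y with
  | nil => simp [iterApp, shuffleProd_nil]
  | cons c w ih =>
    simp only [List.map_cons, iterApp, (hf c).2, iterApp_map_add hf, ih, shuffleProd_cons]

end Derivations

section Filtration

variable {R : Type*} [CommRing R] {u : Set (R → R)}

theorem mem_socleGNat_iff {i : ℕ} {x : R} :
    x ∈ SocleGNat u i ↔ ∀ w : List u, w.length = i + 1 → iterApp (w.map (↑)) x = 0 := by
  refine ⟨fun hx w hw => hx _ (fun _ hD => by obtain ⟨D, -, rfl⟩ := List.mem_map.1 hD; exact D.2)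
    (by simpa using hw), fun hx Ds hDs hlen => ?_⟩
  lift Ds to List u using hDs
  exact hx Ds (by simpa using hlen)

theorem iterApp_eq_zero_of_mem_socleGNat (hu : ∀ D ∈ u, IsDerivation D) {i : ℕ} {x : R}
    (hx : x ∈ SocleGNat u i) {w : List u} (hw : i < w.length) : iterApp (w.map (↑)) x = 0 := by
  rw [← List.take_append_drop (i + 1) w, List.map_append, iterApp_append,
    mem_socleGNat_iff.1 hx _ (by rw [List.length_take]; omega),
    iterApp_map_zero fun D : u => hu D D.2]

theorem mul_mem_socleGNat (hu : ∀ D ∈ u, IsDerivation D) {i j : ℕ} {x y : R}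
    (hx : x ∈ SocleGNat u i) (hy : y ∈ SocleGNat u j) : x * y ∈ SocleGNat u (i + j) :=
  mem_socleGNat_iff.2 fun w hw => by
    rw [iterApp_map_mul fun D : u => hu D D.2]
    exact shuffleProd_eq_zero_of_lt_length (fun _ => iterApp_eq_zero_of_mem_socleGNat hu hx)
      (fun _ => iterApp_eq_zero_of_mem_socleGNat hu hy) (by omega)

theorem exists_length_eq_iota_and_iterApp_ne_zero {z : R} (hz : z ≠ 0) :
    ∃ w : List u, w.length = iota u z ∧ iterApp (w.map (↑)) z ≠ 0 := by
  rcases h : iota u z with _ | k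
  · exact ⟨[], rfl, hz⟩
  · have hk : z ∉ SocleGNat u k := Nat.notMem_of_lt_sInf (show k < iota u z by omega)
    rw [mem_socleGNat_iff] at hk
    push Not at hk
    exact hk

theorem length_le_iota (hu : ∀ D ∈ u, IsDerivation D) {z : R} (hz : ∃ i, z ∈ SocleGNat u i)
    {w : List u} (hw : iterApp (w.map (↑)) z ≠ 0) : w.length ≤ iota u z :=
  not_lt.1 fun h => hw (iterApp_eq_zero_of_mem_socleGNat hu (Nat.sInf_mem hz) h)

end Filtration

/-- In an integral domain of characteristic zero, `ι` is additive:
`ι(x * y) = ι(x) + ι(y)` for nonzero `x, y`. -/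
theorem iota_mul {R : Type*} [CommRing R] [IsDomain R] [CharZero R]
    (u : Set (R → R)) (hu : ∀ D ∈ u, IsDerivation D)
    (hexh : ∀ x : R, ∃ i : ℕ, x ∈ SocleGNat u i)
    (x y : R) (hx : x ≠ 0) (hy : y ≠ 0) :
    iota u (x * y) = iota u x + iota u y := by
  have hxG : x ∈ SocleGNat u (iota u x) := Nat.sInf_mem (hexh x)
  have hyG : y ∈ SocleGNat u (iota u y) := Nat.sInf_mem (hexh y)
  refine le_antisymm (Nat.sInf_le (mul_mem_socleGNat hu hxG hyG)) ?_
  obtain ⟨_, _⟩ := exists_wellFoundedLT u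
  obtain ⟨w, hw, hne⟩ := exists_shuffleProd_ne_zero
    (φ := fun w : List u => iterApp (w.map (↑)) x) (ψ := fun w : List u => iterApp (w.map (↑)) y)
    (fun _ => iterApp_eq_zero_of_mem_socleGNat hu hxG)
    (fun _ => iterApp_eq_zero_of_mem_socleGNat hu hyG)
    (exists_length_eq_iota_and_iterApp_ne_zero hx) (exists_length_eq_iota_and_iterApp_ne_zero hy)
  rw [← iterApp_map_mul fun D : u => hu D D.2] at hne
  exact hw ▸ length_le_iota hu (hexh _) hne
end

section
/- Let P = {(x,t) ∈ ℝ² : −1 ≤ x ≤ 1 and −1 ≤ t ≤ 1 − |x|}, with λ the two-dimensional Lebesgue measure. Then λ(P) = 3, ∫_P (|x| + t) dλ(x,t) = 2/3, and ∫_P t dλ(x,t) = −2/3. Consequently, the average (1/λ(P)) ∫_P (|x| + t) dλ equals 2/9 > 0, and the average (1/λ(P)) ∫_P t dλ equals −2/9 < 0. -/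
open MeasureTheory

open Set


/-- The reflexive polytope of the singular del Pezzo surface of degree 6 with one
ordinary double point: `P = {(x,t) : -1 ≤ x ≤ 1, -1 ≤ t ≤ 1 - |x|}`. -/
def P7 : Set (ℝ × ℝ) :=
  {p | -1 ≤ p.1 ∧ p.1 ≤ 1 ∧ -1 ≤ p.2 ∧ p.2 ≤ 1 - |p.1|}

lemma P7_closed : IsClosed P7 := by
  have h1 : IsClosed {p : ℝ × ℝ | -1 ≤ p.1} := isClosed_le continuous_const continuous_fst
  have h2 : IsClosed {p : ℝ × ℝ | p.1 ≤ 1} := isClosed_le continuous_fst continuous_const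
  have h3 : IsClosed {p : ℝ × ℝ | -1 ≤ p.2} := isClosed_le continuous_const continuous_snd
  have h4 : IsClosed {p : ℝ × ℝ | p.2 ≤ 1 - |p.1|} :=
    isClosed_le continuous_snd (by fun_prop)
  have : P7 = ({p : ℝ × ℝ | -1 ≤ p.1} ∩ {p | p.1 ≤ 1}) ∩
      ({p | -1 ≤ p.2} ∩ {p | p.2 ≤ 1 - |p.1|}) := by
    ext p; simp [P7, and_assoc]
  rw [this]; exact (h1.inter h2).inter (h3.inter h4)

lemma P7_meas : MeasurableSet P7 := P7_closed.measurableSet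

lemma P7_compact : IsCompact P7 := by
  refine (isCompact_Icc (a := ((-1 : ℝ), (-1 : ℝ))) (b := ((1:ℝ), (1:ℝ)))).of_isClosed_subset P7_closed ?_
  rintro ⟨x, t⟩ ⟨h1, h2, h3, h4⟩
  simp only [Set.mem_Icc, Prod.mk_le_mk]
  exact ⟨⟨h1, h3⟩, h2, by linarith [abs_nonneg x]⟩

lemma fubini_P7 (f : ℝ × ℝ → ℝ) (hf : Continuous f) :
    ∫ p in P7, f p = ∫ x in Icc (-1:ℝ) 1, ∫ t in Icc (-1:ℝ) (1 - |x|), f (x, t) := by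
  have hint : IntegrableOn f P7 := hf.continuousOn.integrableOn_compact P7_compact
  rw [← integral_indicator P7_meas, Measure.volume_eq_prod,
    integral_prod _ ((Measure.volume_eq_prod ℝ ℝ) ▸ (integrable_indicator_iff P7_meas).mpr hint),
    ← integral_indicator measurableSet_Icc]
  congr 1; funext x
  by_cases hx : x ∈ Icc (-1:ℝ) 1
  · have : (fun t => P7.indicator f (x, t)) =
        (Icc (-1:ℝ) (1 - |x|)).indicator (fun t => f (x, t)) := by
      funext t
      by_cases ht : t ∈ Icc (-1:ℝ) (1 - |x|)
      · rw [indicator_of_mem ht, indicator_of_mem]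
        exact ⟨hx.1, hx.2, ht.1, ht.2⟩
      · rw [indicator_of_notMem ht, indicator_of_notMem]
        intro hm; exact ht ⟨hm.2.2.1, hm.2.2.2⟩
    rw [this, indicator_of_mem hx, integral_indicator measurableSet_Icc]
  · rw [indicator_of_notMem hx]
    have : (fun t => P7.indicator f (x, t)) = fun _ => 0 := by
      funext t; apply indicator_of_notMem
      intro hm; exact hx ⟨hm.1, hm.2.1⟩
    rw [this, integral_zero]

lemma abs_int : ∫ x in (-1:ℝ)..1, |x| = 1 := by
  have i1 : IntervalIntegrable (fun x : ℝ => |x|) volume (-1) 0 :=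
    continuous_abs.intervalIntegrable _ _
  have i2 : IntervalIntegrable (fun x : ℝ => |x|) volume 0 1 :=
    continuous_abs.intervalIntegrable _ _
  rw [← intervalIntegral.integral_add_adjacent_intervals i1 i2]
  have e1 : ∫ x in (-1:ℝ)..0, |x| = ∫ x in (-1:ℝ)..0, -x := by
    apply intervalIntegral.integral_congr
    intro x hx
    rw [uIcc_of_le (by norm_num)] at hx
    exact abs_of_nonpos hx.2
  have e2 : ∫ x in (0:ℝ)..1, |x| = ∫ x in (0:ℝ)..1, x := by
    apply intervalIntegral.integral_congr
    intro x hx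
    rw [uIcc_of_le (by norm_num)] at hx
    exact abs_of_nonneg hx.1
  rw [e1, e2, intervalIntegral.integral_neg, integral_id, integral_id]
  norm_num

example : True := trivial

lemma icc_to_int {f : ℝ → ℝ} : ∫ x in Icc (-1:ℝ) 1, f x = ∫ x in (-1:ℝ)..1, f x := by
  rw [integral_Icc_eq_integral_Ioc, ← intervalIntegral.integral_of_le (by norm_num : (-1:ℝ) ≤ 1)]

lemma sq_int : ∫ x in (-1:ℝ)..1, x^2 = 2/3 := by
  rw [integral_pow]; norm_num

lemma inner1 (x : ℝ) (hx : x ∈ Icc (-1:ℝ) 1) :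
    ∫ t in Icc (-1:ℝ) (1 - |x|), (|x| + t) = |x| - x^2/2 := by
  have ha : |x| ≤ 1 := abs_le.mpr ⟨hx.1, hx.2⟩
  have hb : (-1:ℝ) ≤ 1 - |x| := by linarith
  rw [integral_Icc_eq_integral_Ioc, ← intervalIntegral.integral_of_le hb,
    intervalIntegral.integral_add (intervalIntegrable_const) intervalIntegral.intervalIntegrable_id,
    intervalIntegral.integral_const, integral_id, smul_eq_mul]
  have h2 := sq_abs x
  nlinarith [sq_abs x]

lemma inner2 (x : ℝ) (hx : x ∈ Icc (-1:ℝ) 1) :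
    ∫ t in Icc (-1:ℝ) (1 - |x|), t = x^2/2 - |x| := by
  have ha : |x| ≤ 1 := abs_le.mpr ⟨hx.1, hx.2⟩
  have hb : (-1:ℝ) ≤ 1 - |x| := by linarith
  rw [integral_Icc_eq_integral_Ioc, ← intervalIntegral.integral_of_le hb, integral_id]
  nlinarith [sq_abs x]

lemma int1 : ∫ p in P7, (|p.1| + p.2) = 2/3 := by
  rw [fubini_P7 _ (by fun_prop),
    setIntegral_congr_fun measurableSet_Icc (fun x hx => inner1 x hx), icc_to_int,
    intervalIntegral.integral_sub (continuous_abs.intervalIntegrable _ _)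
      (by apply Continuous.intervalIntegrable; fun_prop),
    abs_int]
  have : ∫ x in (-1:ℝ)..1, x^2/2 = (∫ x in (-1:ℝ)..1, x^2)/2 := intervalIntegral.integral_div 2 _
  rw [this, sq_int]; norm_num

lemma int2 : ∫ p in P7, p.2 = -(2/3) := by
  rw [fubini_P7 _ (by fun_prop),
    setIntegral_congr_fun measurableSet_Icc (fun x hx => inner2 x hx), icc_to_int,
    intervalIntegral.integral_sub
      (by apply Continuous.intervalIntegrable; fun_prop)
      (continuous_abs.intervalIntegrable _ _),
    abs_int]
  have : ∫ x in (-1:ℝ)..1, x^2/2 = (∫ x in (-1:ℝ)..1, x^2)/2 := intervalIntegral.integral_div 2 _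
  rw [this, sq_int]; norm_num

lemma vol_P7 : volume P7 = 3 := by
  rw [Measure.volume_eq_prod, Measure.prod_apply P7_meas]
  have hrw : (fun x : ℝ => volume (Prod.mk x ⁻¹' P7)) =
      (Icc (-1:ℝ) 1).indicator (fun x => ENNReal.ofReal (2 - |x|)) := by
    funext x
    by_cases hx : x ∈ Icc (-1:ℝ) 1
    · rw [indicator_of_mem hx]
      have : Prod.mk x ⁻¹' P7 = Icc (-1:ℝ) (1 - |x|) := by
        ext t
        simp only [mem_preimage, P7, Set.mem_setOf_eq, Set.mem_Icc]
        exact ⟨fun h => ⟨h.2.2.1, h.2.2.2⟩, fun h => ⟨hx.1, hx.2, h.1, h.2⟩⟩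
      rw [this, Real.volume_Icc]; congr 1; ring
    · rw [indicator_of_notMem hx]
      have : Prod.mk x ⁻¹' P7 = ∅ :=
        eq_empty_iff_forall_notMem.mpr fun t ht => hx (Set.mem_Icc.mpr ⟨ht.1, ht.2.1⟩)
      rw [this]; simp
  rw [hrw]
  show (∫⁻ x, (Icc (-1:ℝ) 1).indicator (fun x => ENNReal.ofReal (2 - |x|)) x) = 3
  rw [lintegral_indicator measurableSet_Icc _,
    
    ← ofReal_integral_eq_lintegral_ofReal
      ((by fun_prop : Continuous fun x : ℝ => 2 - |x|).integrableOn_Icc)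
      (ae_restrict_of_forall_mem measurableSet_Icc fun x hx => by
        simp only [Pi.zero_apply]
        have : |x| ≤ 1 := abs_le.mpr ⟨hx.1, hx.2⟩; linarith)]
  have : ∫ x in Icc (-1:ℝ) 1, (2 - |x|) = 3 := by
    rw [icc_to_int, intervalIntegral.integral_sub (intervalIntegrable_const)
      (continuous_abs.intervalIntegrable _ _), intervalIntegral.integral_const, abs_int]
    norm_num
  rw [this]
  norm_num

/-- `λ(P) = 3`, `∫_P (|x| + t) = 2/3`, `∫_P t = -2/3`, so the average of `|x| + t`
over `P` is `2/9 > 0` and the average of `t` is `-2/9 < 0`. -/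
theorem delPezzo_invariants :
    volume P7 = 3 ∧
    (∫ p in P7, (|p.1| + p.2)) = 2 / 3 ∧
    (∫ p in P7, p.2) = -(2 / 3) ∧
    (1 / (volume P7).toReal) * (∫ p in P7, (|p.1| + p.2)) = 2 / 9 ∧ (0 : ℝ) < 2 / 9 ∧
    (1 / (volume P7).toReal) * (∫ p in P7, p.2) = -(2 / 9) ∧ (-(2 / 9) : ℝ) < 0 := by
  refine ⟨vol_P7, int1, int2, ?_, by norm_num, ?_, by norm_num⟩
  · rw [vol_P7, int1]; norm_num
  · rw [vol_P7, int2]; norm_num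
end

section
/- Let F′ ⊂ ℝ² be the convex hull of the four points (1,1), (0,1), (−2,−1), (1,−1), and let P = {(x,y,t) ∈ ℝ³ : (x,y) ∈ F′ and −1 ≤ t ≤ min{1, 1+y}}, with λ the three-dimensional Lebesgue measure. Then λ(P) = 20/3, ∫_P (max{0, −y} + t) dλ(x,y,t) = 7/8, and ∫_P t dλ(x,y,t) = −7/8. Consequently, (1/λ(P)) ∫_P (max{0,−y} + t) dλ = 21/160 > 0 and (1/λ(P)) ∫_P t dλ = −21/160 < 0. -/
open MeasureTheory

/-- The polytope of the Hirzebruch surface `Σ₁`: the convex hull of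
`(1,1), (0,1), (-2,-1), (1,-1)`. -/
def F8 : Set (ℝ × ℝ) :=
  convexHull ℝ {(1, 1), (0, 1), (-2, -1), (1, -1)}

/-- The reflexive polytope of the smooth toric Fano 3-fold obtained by blowing up
`Σ₁ × ℙ¹` along `C × {p}`:
`P = {(x,y,t) : (x,y) ∈ F′, -1 ≤ t ≤ min {1, 1 + y}}`. -/
def P8 : Set (ℝ × ℝ × ℝ) :=
  {p | (p.1, p.2.1) ∈ F8 ∧ -1 ≤ p.2.2 ∧ p.2.2 ≤ min 1 (1 + p.2.1)}

/-! Over each point `(y, t)` of its projection, `P` is the segment `y - 1 ≤ x ≤ 1` of length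
`2 - y`. By Fubini, `∫_P f(y, t) = ∫_{-1}^{1} (2 - y) ∫_{-1}^{min(1, 1 + y)} f(y, t) dt dy`, and
splitting at `y = 0` removes the `min`, leaving integrals of cubic polynomials. -/

open Set

theorem F8_eq_setOf : F8 = {p | -1 ≤ p.2 ∧ p.2 ≤ 1 ∧ p.2 - 1 ≤ p.1 ∧ p.1 ≤ 1} := by
  apply Subset.antisymm
  · refine convexHull_min ?_ ?_
    · rintro p (rfl | rfl | rfl | rfl) <;> norm_num
    · rintro ⟨x, y⟩ ⟨h₁, h₂, h₃, h₄⟩ ⟨x', y'⟩ ⟨h₁', h₂', h₃', h₄'⟩ a b ha hb hab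
      simp only [Prod.smul_mk, Prod.mk_add_mk, smul_eq_mul]
      refine ⟨?_, ?_, ?_, ?_⟩ <;> nlinarith
  · rintro ⟨x, y⟩ ⟨hy₁, hy₂, hx₁, hx₂⟩
    have hconv : Convex ℝ F8 := convex_convexHull ℝ _
    have vertex : ∀ v ∈ ({(1, 1), (0, 1), (-2, -1), (1, -1)} : Set (ℝ × ℝ)), v ∈ F8 :=
      fun v hv => subset_convexHull ℝ _ hv
    -- the horizontal chord at height `y` joins the edges `[(-2,-1), (0,1)]` and `[(1,-1), (1,1)]`
    have hleft : (y - 1, y) ∈ F8 :=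
      hconv.segment_subset (vertex (-2, -1) (by simp)) (vertex (0, 1) (by simp))
        ⟨(1 - y) / 2, (1 + y) / 2, by linarith, by linarith, by ring, by ext <;> norm_num; ring⟩
    have hright : (1, y) ∈ F8 :=
      hconv.segment_subset (vertex (1, -1) (by simp)) (vertex (1, 1) (by simp))
        ⟨(1 - y) / 2, (1 + y) / 2, by linarith, by linarith, by ring, by ext <;> simp <;> ring⟩
    refine hconv.segment_subset hleft hright ?_
    rw [← Prod.image_mk_segment_left, segment_eq_Icc (by linarith)]
    exact ⟨x, ⟨hx₁, hx₂⟩, rfl⟩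

theorem setIntegral_prod_Icc_fiber {α E : Type*} [MeasurableSpace α] [NormedAddCommGroup E]
    [NormedSpace ℝ E] {μ : Measure α} [SFinite μ] {s : Set α} {l u : α → ℝ}
    (hs : MeasurableSet s) (hl : Measurable l) (hu : Measurable u) {F : α × ℝ → E}
    (hF : IntegrableOn F {p | p.1 ∈ s ∧ p.2 ∈ Icc (l p.1) (u p.1)} (μ.prod volume)) :
    ∫ p in {p | p.1 ∈ s ∧ p.2 ∈ Icc (l p.1) (u p.1)}, F p ∂μ.prod volume =
      ∫ a in s, (∫ t in Icc (l a) (u a), F (a, t)) ∂μ := by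
  have hR : MeasurableSet {p : α × ℝ | p.1 ∈ s ∧ p.2 ∈ Icc (l p.1) (u p.1)} :=
    (hs.preimage measurable_fst).inter
      ((measurableSet_le (hl.comp measurable_fst) measurable_snd).inter
        (measurableSet_le measurable_snd (hu.comp measurable_fst)))
  rw [← integral_indicator hR, integral_prod _ (hF.integrable_indicator hR),
    ← integral_indicator hs]
  congr 1 with a
  by_cases ha : a ∈ s
  · rw [indicator_of_mem ha, ← integral_indicator measurableSet_Icc]
    congr 1 with t
    simp only [indicator, mem_ofPred_eq, ha, true_and]
  · simp [indicator, ha]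

theorem setIntegral_P8 (f : ℝ × ℝ → ℝ) (hf : Continuous f) :
    ∫ p in P8, f p.2 =
      ∫ y in Icc (-1 : ℝ) 1, ∫ t in Icc (-1 : ℝ) (min 1 (1 + y)), (2 - y) * f (y, t) := by
  set B : Set (ℝ × ℝ) := {z | z.1 ∈ Icc (-1) 1 ∧ z.2 ∈ Icc (-1) (min 1 (1 + z.1))} with hB
  have hB_sub : B ⊆ Icc (-1) 1 ×ˢ Icc (-1) 1 :=
    fun z ⟨hy, ht⟩ => ⟨hy, ht.1, ht.2.trans (min_le_left _ _)⟩
  have hB_meas : MeasurableSet B :=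
    (measurableSet_Icc.preimage measurable_fst).inter
      ((measurableSet_le measurable_const measurable_snd).inter
        (measurableSet_le measurable_snd (by fun_prop)))
  have hP8 : Prod.swap ⁻¹' P8 = {q : (ℝ × ℝ) × ℝ | q.1 ∈ B ∧ q.2 ∈ Icc (q.1.1 - 1) 1} := by
    ext ⟨⟨y, t⟩, x⟩
    simp only [P8, F8_eq_setOf, hB, mem_preimage, Prod.swap_prod_mk, mem_ofPred_eq, mem_Icc]
    tauto
  have hswap_sub : {q : (ℝ × ℝ) × ℝ | q.1 ∈ B ∧ q.2 ∈ Icc (q.1.1 - 1) 1} ⊆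
      (Icc (-1) 1 ×ˢ Icc (-1) 1) ×ˢ Icc (-2) 1 :=
    fun q ⟨hz, hx⟩ => ⟨hB_sub hz, by linarith [hz.1.1, hx.1], hx.2⟩
  have hint_swap : IntegrableOn (fun q : (ℝ × ℝ) × ℝ => f q.1)
      {q | q.1 ∈ B ∧ q.2 ∈ Icc (q.1.1 - 1) 1} (volume.prod volume) :=
    ((hf.comp continuous_fst).continuousOn.integrableOn_compact
      ((isCompact_Icc.prod isCompact_Icc).prod isCompact_Icc)).mono_set hswap_sub
  have hint_B : IntegrableOn (fun z : ℝ × ℝ => (2 - z.1) * f z) B (volume.prod volume) :=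
    ((by fun_prop : Continuous fun z : ℝ × ℝ => (2 - z.1) * f z).continuousOn.integrableOn_compact
      (isCompact_Icc.prod isCompact_Icc)).mono_set hB_sub
  calc ∫ p in P8, f p.2
      = ∫ q in Prod.swap ⁻¹' P8, f q.1 ∂(volume.prod volume) :=
        (Measure.measurePreserving_swap.setIntegral_preimage_emb
          MeasurableEquiv.prodComm.measurableEmbedding _ _).symm
    _ = ∫ z in B, ∫ x in Icc (z.1 - 1) 1, f z := by
        rw [hP8]
        exact setIntegral_prod_Icc_fiber (μ := (volume : Measure (ℝ × ℝ))) (l := fun z => z.1 - 1)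
          (u := fun _ => 1) hB_meas (by fun_prop) measurable_const hint_swap
    _ = ∫ z in B, (2 - z.1) * f z := by
        refine setIntegral_congr_fun hB_meas fun z hz => ?_
        rw [setIntegral_const, Real.volume_real_Icc_of_le (by linarith [hz.1.2]), smul_eq_mul]
        ring_nf
    _ = _ := by
        rw [Measure.volume_eq_prod]
        exact setIntegral_prod_Icc_fiber (F := fun z => (2 - z.1) * f z) (l := fun _ => -1)
          (u := fun y => min 1 (1 + y)) measurableSet_Icc measurable_const (by fun_prop) hint_B

theorem setIntegral_P8_eq_add (f : ℝ × ℝ → ℝ) (hf : Continuous f) :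
    ∫ p in P8, f p.2 =
      (∫ y in (-1 : ℝ)..0, (2 - y) * ∫ t in (-1 : ℝ)..(1 + y), f (y, t)) +
        ∫ y in (0 : ℝ)..1, (2 - y) * ∫ t in (-1 : ℝ)..1, f (y, t) := by
  set g : ℝ → ℝ := fun y => (2 - y) * ∫ t in (-1 : ℝ)..(min 1 (1 + y)), f (y, t) with hg
  have hg_cont : Continuous g :=
    continuous_const.sub continuous_id |>.mul <|
      intervalIntegral.continuous_parametric_intervalIntegral_of_continuous
        (f := fun y t => f (y, t)) hf (by fun_prop)
  have hP8 : ∫ p in P8, f p.2 = ∫ y in (-1 : ℝ)..1, g y := by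
    rw [setIntegral_P8 f hf, intervalIntegral.integral_of_le (by norm_num),
      ← integral_Icc_eq_integral_Ioc]
    refine setIntegral_congr_fun measurableSet_Icc fun y hy => ?_
    rw [hg, integral_Icc_eq_integral_Ioc, ← intervalIntegral.integral_of_le
      (le_min (by norm_num) (by linarith [hy.1])), intervalIntegral.integral_const_mul]
  rw [hP8, ← intervalIntegral.integral_add_adjacent_intervals (b := 0)
    (hg_cont.intervalIntegrable _ _) (hg_cont.intervalIntegrable _ _)]
  congr 1 <;> refine intervalIntegral.integral_congr fun y hy => ?_
  · rw [uIcc_of_le (by norm_num)] at hy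
    simp only [hg, min_eq_right (by linarith [hy.2] : 1 + y ≤ 1)]
  · rw [uIcc_of_le (by norm_num)] at hy
    simp only [hg, min_eq_left (by linarith [hy.1] : (1 : ℝ) ≤ 1 + y)]

theorem integral_cubic (a b c₀ c₁ c₂ c₃ : ℝ) :
    ∫ y in a..b, (c₀ + c₁ * y + c₂ * y ^ 2 + c₃ * y ^ 3) =
      (c₀ * b + c₁ * b ^ 2 / 2 + c₂ * b ^ 3 / 3 + c₃ * b ^ 4 / 4) -
        (c₀ * a + c₁ * a ^ 2 / 2 + c₂ * a ^ 3 / 3 + c₃ * a ^ 4 / 4) := by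
  refine intervalIntegral.integral_eq_sub_of_hasDerivAt
    (f := fun y => c₀ * y + c₁ * y ^ 2 / 2 + c₂ * y ^ 3 / 3 + c₃ * y ^ 4 / 4) (fun y _ => ?_)
    ((by fun_prop : Continuous fun y : ℝ => c₀ + c₁ * y + c₂ * y ^ 2 + c₃ * y ^ 3).intervalIntegrable
      a b)
  convert ((((hasDerivAt_id y).const_mul c₀).add
    (((hasDerivAt_pow 2 y).const_mul c₁).div_const 2)).add
    (((hasDerivAt_pow 3 y).const_mul c₂).div_const 3)).add
    (((hasDerivAt_pow 4 y).const_mul c₃).div_const 4) using 1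
  · rfl
  · push_cast; ring

theorem setIntegral_P8_one : ∫ _ in P8, (1 : ℝ) = 20 / 3 := by
  rw [setIntegral_P8_eq_add (fun _ => 1) continuous_const]
  have h₁ : ∀ y : ℝ, (2 - y) * ∫ _ in (-1 : ℝ)..(1 + y), (1 : ℝ) =
      4 + 0 * y + (-1) * y ^ 2 + 0 * y ^ 3 := fun y => by simp; ring
  have h₂ : ∀ y : ℝ, (2 - y) * ∫ _ in (-1 : ℝ)..1, (1 : ℝ) =
      4 + (-2) * y + 0 * y ^ 2 + 0 * y ^ 3 := fun y => by simp; ring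
  simp only [h₁, h₂, integral_cubic]
  norm_num

theorem setIntegral_P8_snd_snd : ∫ p in P8, p.2.2 = -(7 / 8) := by
  rw [setIntegral_P8_eq_add Prod.snd continuous_snd]
  have h₁ : ∀ y : ℝ, (2 - y) * ∫ t in (-1 : ℝ)..(1 + y), t =
      0 + 2 * y + 0 * y ^ 2 + (-1 / 2) * y ^ 3 := fun y => by simp; ring
  have h₂ : ∀ y : ℝ, (2 - y) * ∫ t in (-1 : ℝ)..1, t = 0 + 0 * y + 0 * y ^ 2 + 0 * y ^ 3 :=
    fun y => by simp
  simp only [h₁, h₂, integral_cubic]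
  norm_num

theorem setIntegral_P8_max_neg_add : ∫ p in P8, (max 0 (-p.2.1) + p.2.2) = 7 / 8 := by
  rw [setIntegral_P8_eq_add (fun z => max 0 (-z.1) + z.2) (by fun_prop)]
  have h_int : ∀ y b : ℝ, ∫ t in (-1 : ℝ)..b, (max 0 (-y) + t) =
      (b + 1) * max 0 (-y) + (b ^ 2 - 1) / 2 := fun y b => by
    rw [intervalIntegral.integral_add intervalIntegrable_const
      intervalIntegral.intervalIntegrable_id]
    simp
  have h₁ : ∀ y ∈ uIcc (-1 : ℝ) 0, (2 - y) * ∫ t in (-1 : ℝ)..(1 + y), (max 0 (-y) + t) =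
      0 + (-2) * y + 0 * y ^ 2 + (1 / 2) * y ^ 3 := fun y hy => by
    rw [uIcc_of_le (by norm_num)] at hy
    rw [h_int, max_eq_right (by linarith [hy.2])]
    ring
  have h₂ : ∀ y ∈ uIcc (0 : ℝ) 1, (2 - y) * ∫ t in (-1 : ℝ)..1, (max 0 (-y) + t) =
      0 + 0 * y + 0 * y ^ 2 + 0 * y ^ 3 := fun y hy => by
    rw [uIcc_of_le (by norm_num)] at hy
    rw [h_int, max_eq_left (by linarith [hy.1])]
    ring
  rw [intervalIntegral.integral_congr h₁, intervalIntegral.integral_congr h₂, integral_cubic,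
    integral_cubic]
  norm_num

/-- `λ(P) = 20/3`, `∫_P (max{0,-y} + t) = 7/8`, `∫_P t = -7/8`, so the average of
`max{0,-y} + t` over `P` is `21/160 > 0` and the average of `t` is `-21/160 < 0`. -/
theorem smooth_toric_Fano_threefold_invariants :
    volume P8 = 20 / 3 ∧
    (∫ p in P8, (max 0 (-p.2.1) + p.2.2)) = 7 / 8 ∧
    (∫ p in P8, p.2.2) = -(7 / 8) ∧
    (1 / (volume P8).toReal) * (∫ p in P8, (max 0 (-p.2.1) + p.2.2)) = 21 / 160 ∧
    (0 : ℝ) < 21 / 160 ∧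
    (1 / (volume P8).toReal) * (∫ p in P8, p.2.2) = -(21 / 160) ∧
    (-(21 / 160) : ℝ) < 0 := by
  have h_real : (volume P8).toReal = 20 / 3 := by
    rw [← measureReal_def, ← setIntegral_P8_one, setIntegral_const, smul_eq_mul, mul_one]
  have h_vol : volume P8 = 20 / 3 := by
    have h_fin : volume P8 ≠ ⊤ := (ENNReal.toReal_pos_iff.mp (by rw [h_real]; norm_num)).2.ne
    rw [← ENNReal.ofReal_toReal h_fin, h_real, ENNReal.ofReal_div_of_pos (by norm_num)]
    norm_num
  rw [h_real, setIntegral_P8_max_neg_add, setIntegral_P8_snd_snd]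
  exact ⟨h_vol, rfl, rfl, by norm_num, by norm_num, by norm_num, by norm_num⟩
end

section
/- Fix an integer d ≥ 1 and let R_d ⊂ ℂ[X,Y,Z] be the ℂ-linear span of the monomials X^a Y^b Z^{3d−a−b} with 0 ≤ a ≤ 2d, 0 ≤ b ≤ 2d and a + b ≤ 3d. Then a polynomial f ∈ R_d satisfies f(X + αZ, Y + βZ, Z) − f(X, Y, Z) ∈ ℂ·Z^{3d} for all α, β ∈ ℂ if and only if f lies in the ℂ-linear span of the three monomials X Z^{3d−1}, Y Z^{3d−1}, Z^{3d}. -/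
open MvPolynomial

/-- `R_d ⊂ ℂ[X,Y,Z]`: the span of the monomials `X^a Y^b Z^(3d-a-b)` with
`0 ≤ a, b ≤ 2d` and `a + b ≤ 3d`.  (Variables: `X = X 0`, `Y = X 1`, `Z = X 2`.) -/
noncomputable def Rd (d : ℕ) : Submodule ℂ (MvPolynomial (Fin 3) ℂ) :=
  Submodule.span ℂ
    {m | ∃ a b : ℕ, a ≤ 2 * d ∧ b ≤ 2 * d ∧ a + b ≤ 3 * d ∧
      m = X 0 ^ a * X 1 ^ b * X 2 ^ (3 * d - a - b)}

/-- The `ℂ`-algebra endomorphism of `ℂ[X,Y,Z]` sending `X ↦ X + αZ`, `Y ↦ Y + βZ`,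
`Z ↦ Z`: the action of `(α, β)` in the unipotent radical of `Aut(S)`. -/
noncomputable def unipAction (α β : ℂ) :
    MvPolynomial (Fin 3) ℂ →ₐ[ℂ] MvPolynomial (Fin 3) ℂ :=
  aeval ![X 0 + C α * X 2, X 1 + C β * X 2, X 2]

/-!
Every element of `R_d` is a form of degree `n = 3d`. Replacing `α` by a polynomial variable `T`,
`f(X + TZ, Y, Z)` is a polynomial in `T` with constant term `f` and linear coefficient `Z ∂f/∂X`.
Over an infinite field, a polynomial all of whose values lie in a subspace has all its
coefficients there, so `Z ∂f/∂X ∈ ℂ·Zⁿ`, and likewise `Z ∂f/∂Y ∈ ℂ·Zⁿ`. Read on coefficients,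
this says that a monomial of `f` divisible by `X` (resp. `Y`) can only be `XZⁿ⁻¹` (resp. `YZⁿ⁻¹`),
and by homogeneity the only other one is `Zⁿ`. Conversely, the substitution sends `XZⁿ⁻¹` to
`XZⁿ⁻¹ + αZⁿ`, `YZⁿ⁻¹` to `YZⁿ⁻¹ + βZⁿ`, and fixes `Zⁿ`.
-/

theorem Polynomial.coeff_mem_of_forall_eval_mem {K A : Type*} [Field K] [Infinite K]
    [CommRing A] [Algebra K A] {U : Submodule K A} {p : Polynomial A}
    (h : ∀ α : K, p.eval (algebraMap K A α) ∈ U) (k : ℕ) : p.coeff k ∈ U := by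
  by_contra hk
  -- A functional killing `U` but not `p.coeff k` turns `p` into a scalar polynomial vanishing
  -- on all of `K`.
  obtain ⟨φ, hφk, hφU⟩ := Submodule.exists_dual_map_eq_bot_of_notMem hk inferInstance
  let q : Polynomial K := ∑ i ∈ p.support, Polynomial.monomial i (φ (p.coeff i))
  have hq : q = 0 := Polynomial.funext fun α => by
    have : φ _ = 0 := (Submodule.mem_bot K).1 (hφU ▸ Submodule.mem_map_of_mem (h α))
    rw [Polynomial.eval_eq_sum, Polynomial.sum_def, map_sum] at this
    simp only [← map_pow, ← Algebra.commutes, ← Algebra.smul_def, map_smul, smul_eq_mul]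
      at this
    simpa [q, Polynomial.eval_finsetSum, mul_comm] using this
  apply hφk
  have := congr(Polynomial.coeff $hq k)
  simp only [q, Polynomial.finsetSum_coeff, Polynomial.coeff_monomial, Finset.sum_ite_eq',
    Polynomial.coeff_zero] at this
  split_ifs at this with hk'
  · exact this
  · simp [Polynomial.notMem_support_iff.1 hk']

section Transvection

variable {σ R : Type*} [CommRing R] [DecidableEq σ]

noncomputable def transvectionPoly (i j : σ) :
    MvPolynomial σ R →ₐ[R] Polynomial (MvPolynomial σ R) :=
  aeval fun k => Polynomial.C (X k) + Polynomial.X * Polynomial.C (Pi.single i (X j) k)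

variable (i j : σ)

theorem transvectionPoly_coeff_zero (f : MvPolynomial σ R) :
    (transvectionPoly i j f).coeff 0 = f := by
  have : (Polynomial.constantCoeff (R := MvPolynomial σ R)).comp
      (transvectionPoly i j).toRingHom = RingHom.id _ :=
    ringHom_ext (fun r => by simp [transvectionPoly]) (fun k => by simp [transvectionPoly])
  exact congr($this f)

theorem transvectionPoly_coeff_one (f : MvPolynomial σ R) :
    (transvectionPoly i j f).coeff 1 = X j * pderiv i f := by
  induction f using MvPolynomial.induction_on with
  | C r => simp [transvectionPoly]
  | add p q hp hq => simp [hp, hq, mul_add]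
  | mul_X p k hp =>
    have hX : (transvectionPoly i j (X k : MvPolynomial σ R)).coeff 1 =
        X j * pderiv i (X k) := by
      by_cases h : k = i <;> simp [transvectionPoly, pderiv_X, Pi.single_apply, h]
    rw [map_mul, Polynomial.mul_coeff_one, transvectionPoly_coeff_zero, hp, hX,
      transvectionPoly_coeff_zero, Derivation.leibniz, smul_eq_mul, smul_eq_mul]
    ring

end Transvection

theorem X_mul_pderiv_mem_of_forall_eval_sub_mem {σ K : Type*} [Field K] [Infinite K]
    [DecidableEq σ] {U : Submodule K (MvPolynomial σ K)} {f : MvPolynomial σ K} {i j : σ}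
    (h : ∀ α : K, (transvectionPoly i j f).eval (C α) - f ∈ U) : X j * pderiv i f ∈ U := by
  simpa [transvectionPoly_coeff_one] using
    Polynomial.coeff_mem_of_forall_eval_mem (p := transvectionPoly i j f - Polynomial.C f)
      (fun α => by simpa using h α) 1

theorem single_add_eq_of_X_mul_pderiv_mem_restrictSupport {σ R : Type*} [CommRing R]
    [NoZeroDivisors R] [CharZero R] {f : MvPolynomial σ R} {i j : σ} {e : σ →₀ ℕ}
    (h : X j * pderiv i f ∈ restrictSupport R {e}) {m : σ →₀ ℕ}
    (hm : m + Finsupp.single i 1 ∈ f.support) : Finsupp.single j 1 + m = e := by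
  apply (mem_restrictSupport_iff R).1 h
  rw [Finset.mem_coe, mem_support_iff, coeff_X_mul, coeff_pderiv]
  exact mul_ne_zero (mem_support_iff.1 hm) (by exact_mod_cast (m i).succ_ne_zero)

theorem eq_single_add_single_of_X_mul_pderiv_mem_restrictSupport {σ R : Type*} [CommRing R]
    [NoZeroDivisors R] [CharZero R] {f : MvPolynomial σ R} {i j : σ} {n : ℕ}
    (h : X j * pderiv i f ∈ restrictSupport R {Finsupp.single j n}) {m : σ →₀ ℕ}
    (hm : m ∈ f.support) (hmi : m i ≠ 0) : m = Finsupp.single i 1 + Finsupp.single j (n - 1) := by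
  classical
  obtain ⟨m, rfl⟩ : ∃ m', m = m' + Finsupp.single i 1 :=
    ⟨m - Finsupp.single i 1, (tsub_add_cancel_of_le (Finsupp.single_le_iff.2 (by omega))).symm⟩
  have hm' := single_add_eq_of_X_mul_pderiv_mem_restrictSupport h hm
  ext k
  have hk := DFunLike.congr_fun hm' k
  simp only [Finsupp.coe_add, Pi.add_apply, Finsupp.single_apply] at hk ⊢
  split_ifs at hk ⊢ <;> omega

theorem Rd_le_homogeneousSubmodule (d : ℕ) : Rd d ≤ homogeneousSubmodule (Fin 3) ℂ (3 * d) := by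
  rw [Rd, Submodule.span_le]
  rintro _ ⟨a, b, -, -, hab, rfl⟩
  rw [SetLike.mem_coe, mem_homogeneousSubmodule]
  have := ((isHomogeneous_X_pow (R := ℂ) (0 : Fin 3) a).mul (isHomogeneous_X_pow 1 b)).mul
    (isHomogeneous_X_pow 2 (3 * d - a - b))
  rw [show a + b + (3 * d - a - b) = 3 * d by omega] at this
  exact this

theorem unipAction_zero_right_eq_eval (α : ℂ) (f : MvPolynomial (Fin 3) ℂ) :
    unipAction α 0 f = (transvectionPoly 0 2 f).eval (C α) := by
  have : (unipAction α 0).toRingHom =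
      (Polynomial.evalRingHom (C α)).comp (transvectionPoly 0 2).toRingHom :=
    ringHom_ext (fun r => by simp [unipAction, transvectionPoly])
      (fun k => by fin_cases k <;> simp [unipAction, transvectionPoly, mul_comm (C _)])
  exact congr($this f)

theorem unipAction_zero_left_eq_eval (β : ℂ) (f : MvPolynomial (Fin 3) ℂ) :
    unipAction 0 β f = (transvectionPoly 1 2 f).eval (C β) := by
  have : (unipAction 0 β).toRingHom =
      (Polynomial.evalRingHom (C β)).comp (transvectionPoly 1 2).toRingHom :=
    ringHom_ext (fun r => by simp [unipAction, transvectionPoly])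
      (fun k => by fin_cases k <;> simp [unipAction, transvectionPoly, mul_comm (C _)])
  exact congr($this f)

theorem span_X_mul_X_pow_eq_restrictSupport (n : ℕ) :
    Submodule.span ℂ {X 0 * X 2 ^ (n - 1), X 1 * X 2 ^ (n - 1),
      (X 2 ^ n : MvPolynomial (Fin 3) ℂ)} =
    restrictSupport ℂ {Finsupp.single 0 1 + Finsupp.single 2 (n - 1),
      Finsupp.single 1 1 + Finsupp.single 2 (n - 1), Finsupp.single 2 n} := by
  rw [restrictSupport_eq_span, Set.image_insert_eq, Set.image_insert_eq, Set.image_singleton]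
  simp only [X, monomial_pow, monomial_mul, Finsupp.smul_single, smul_eq_mul, mul_one, one_pow]

theorem support_subset_of_X_mul_pderiv_mem_restrictSupport {n : ℕ} {f : MvPolynomial (Fin 3) ℂ}
    (hf : f.IsHomogeneous n) (hX : X 2 * pderiv 0 f ∈ restrictSupport ℂ {Finsupp.single 2 n})
    (hY : X 2 * pderiv 1 f ∈ restrictSupport ℂ {Finsupp.single 2 n}) :
    (f.support : Set (Fin 3 →₀ ℕ)) ⊆ {Finsupp.single 0 1 + Finsupp.single 2 (n - 1),
      Finsupp.single 1 1 + Finsupp.single 2 (n - 1), Finsupp.single 2 n} := by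
  intro m hm
  by_cases h0 : m 0 = 0
  · by_cases h1 : m 1 = 0
    · have hdeg : m 0 + m 1 + m 2 = n := by
        have := hf (mem_support_iff.1 hm)
        rwa [Pi.one_def, ← Finsupp.degree_eq_weight_one, Finsupp.degree_eq_sum,
          Fin.sum_univ_three] at this
      right; right
      ext k
      fin_cases k <;> simp <;> omega
    · exact .inr (.inl (eq_single_add_single_of_X_mul_pderiv_mem_restrictSupport hY hm h1))
  · exact .inl (eq_single_add_single_of_X_mul_pderiv_mem_restrictSupport hX hm h0)

theorem mem_span_of_forall_unipAction_sub_eq_smul {n : ℕ} {f : MvPolynomial (Fin 3) ℂ}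
    (hf : f.IsHomogeneous n) (H : ∀ α β : ℂ, ∃ c : ℂ, unipAction α β f - f = c • X 2 ^ n) :
    f ∈ Submodule.span ℂ {X 0 * X 2 ^ (n - 1), X 1 * X 2 ^ (n - 1), X 2 ^ n} := by
  have hZ (c : ℂ) : c • (X 2 ^ n : MvPolynomial (Fin 3) ℂ) ∈
      restrictSupport ℂ {Finsupp.single 2 n} := by
    simp [X_pow_eq_monomial, smul_monomial]
  have hX : X 2 * pderiv 0 f ∈ restrictSupport ℂ {Finsupp.single 2 n} :=
    X_mul_pderiv_mem_of_forall_eval_sub_mem fun α => by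
      obtain ⟨c, hc⟩ := H α 0
      rw [← unipAction_zero_right_eq_eval, hc]
      exact hZ c
  have hY : X 2 * pderiv 1 f ∈ restrictSupport ℂ {Finsupp.single 2 n} :=
    X_mul_pderiv_mem_of_forall_eval_sub_mem fun β => by
      obtain ⟨c, hc⟩ := H 0 β
      rw [← unipAction_zero_left_eq_eval, hc]
      exact hZ c
  rw [span_X_mul_X_pow_eq_restrictSupport, mem_restrictSupport_iff ℂ]
  exact support_subset_of_X_mul_pderiv_mem_restrictSupport hf hX hY

theorem exists_unipAction_sub_eq_smul_of_mem_span {n : ℕ} (hn : 1 ≤ n) (α β : ℂ)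
    {f : MvPolynomial (Fin 3) ℂ}
    (hf : f ∈ Submodule.span ℂ {X 0 * X 2 ^ (n - 1), X 1 * X 2 ^ (n - 1), X 2 ^ n}) :
    ∃ c : ℂ, unipAction α β f - f = c • X 2 ^ n := by
  obtain ⟨k, rfl⟩ := Nat.exists_eq_add_of_le' hn
  suffices Submodule.span ℂ {X 0 * X 2 ^ k, X 1 * X 2 ^ k, X 2 ^ (k + 1)} ≤
      (Submodule.span ℂ {X 2 ^ (k + 1)}).comap ((unipAction α β).toLinearMap - LinearMap.id) by
    simpa [Submodule.mem_span_singleton, eq_comm] using this hf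
  rw [Submodule.span_le]
  rintro _ (rfl | rfl | rfl) <;>
    simp only [SetLike.mem_coe, Submodule.mem_comap, LinearMap.sub_apply,
      AlgHom.toLinearMap_apply, LinearMap.id_apply, Submodule.mem_span_singleton]
  all_goals simp only [unipAction, map_mul, map_pow, aeval_X, Matrix.cons_val_zero,
    Matrix.cons_val_one, Matrix.cons_val, sub_self]
  · exact ⟨α, by rw [smul_eq_C_mul]; ring⟩
  · exact ⟨β, by rw [smul_eq_C_mul]; ring⟩
  · exact ⟨0, zero_smul ℂ _⟩

/-- An element `f ∈ R_d` is invariant modulo `ℂ·Z^(3d)` under all the substitutions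
`X ↦ X + αZ, Y ↦ Y + βZ, Z ↦ Z` if and only if it lies in the span of
`X Z^(3d-1)`, `Y Z^(3d-1)`, `Z^(3d)`. -/
theorem socle_one_of_blowup (d : ℕ) (hd : 1 ≤ d) (f : MvPolynomial (Fin 3) ℂ)
    (hf : f ∈ Rd d) :
    (∀ α β : ℂ, ∃ c : ℂ, unipAction α β f - f = c • X 2 ^ (3 * d)) ↔
      f ∈ Submodule.span ℂ
        {X 0 * X 2 ^ (3 * d - 1), X 1 * X 2 ^ (3 * d - 1),
          (X 2 ^ (3 * d) : MvPolynomial (Fin 3) ℂ)} :=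
  ⟨mem_span_of_forall_unipAction_sub_eq_smul
      ((mem_homogeneousSubmodule _ _).1 (Rd_le_homogeneousSubmodule d hf)),
    fun h α β => exists_unipAction_sub_eq_smul_of_mem_span (by omega) α β h⟩
end

section
/- Fix integers d ≥ 1 and i ≥ 0, and let R_d ⊂ ℂ[X,Y,Z] be the ℂ-linear span of the monomials X^a Y^b Z^{3d−a−b} with 0 ≤ a ≤ 2d, 0 ≤ b ≤ 2d and a + b ≤ 3d. Consider the two derivations D_X = Z·(∂/∂X) and D_Y = Z·(∂/∂Y) of ℂ[X,Y,Z]. Then f ∈ R_d is annihilated by every composition of i+1 operators, each equal to D_X or D_Y, if and only if f lies in the ℂ-linear span of the monomials X^a Y^b Z^{3d−a−b} with 0 ≤ a ≤ 2d, 0 ≤ b ≤ 2d and a + b ≤ min{i, 3d}. -/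
open MvPolynomial

/-- The derivation `D_X = Z·∂/∂X` of `ℂ[X,Y,Z]`. -/
noncomputable def DX (f : MvPolynomial (Fin 3) ℂ) : MvPolynomial (Fin 3) ℂ :=
  X 2 * pderiv 0 f

/-- The derivation `D_Y = Z·∂/∂Y` of `ℂ[X,Y,Z]`. -/
noncomputable def DY (f : MvPolynomial (Fin 3) ℂ) : MvPolynomial (Fin 3) ℂ :=
  X 2 * pderiv 1 f

/-- Apply a composite of the operators `D_X`/`D_Y`, encoded by a list of Booleans
(`true` for `D_X`, `false` for `D_Y`), the head of the list acting first. -/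
noncomputable def applyOps (L : List Bool) (f : MvPolynomial (Fin 3) ℂ) :
    MvPolynomial (Fin 3) ℂ :=
  L.foldl (fun g b => if b then DX g else DY g) f

namespace SocleAux

/-- The exponent finsupp of the monomial `X^a Y^b Z^c`. -/
noncomputable def e (a b c : ℕ) : Fin 3 →₀ ℕ :=
  Finsupp.single 0 a + Finsupp.single 1 b + Finsupp.single 2 c

lemma e_apply0 (a b c : ℕ) : e a b c 0 = a := by
  simp [e, Finsupp.single_apply]

lemma e_apply1 (a b c : ℕ) : e a b c 1 = b := by
  simp [e, Finsupp.single_apply]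

lemma e_apply2 (a b c : ℕ) : e a b c 2 = c := by
  simp [e, Finsupp.single_apply]

lemma Xpow (a b c : ℕ) :
    (X 0 ^ a * X 1 ^ b * X 2 ^ c : MvPolynomial (Fin 3) ℂ) = monomial (e a b c) 1 := by
  rw [X_pow_eq_monomial, X_pow_eq_monomial, X_pow_eq_monomial, monomial_mul, monomial_mul]
  simp [e]

lemma esub0 (a b c : ℕ) :
    Finsupp.single 2 1 + (e a b c - Finsupp.single 0 1) = e (a - 1) b (c + 1) := by
  ext x
  fin_cases x <;>
    simp [e, Finsupp.tsub_apply, Finsupp.single_apply] <;> omega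

lemma esub1 (a b c : ℕ) :
    Finsupp.single 2 1 + (e a b c - Finsupp.single 1 1) = e a (b - 1) (c + 1) := by
  ext x
  fin_cases x <;>
    simp [e, Finsupp.tsub_apply, Finsupp.single_apply] <;> omega

lemma X2_eq : (X 2 : MvPolynomial (Fin 3) ℂ) = monomial (Finsupp.single 2 1) 1 := by
  rw [← X_pow_eq_monomial, pow_one]

lemma DX_mon (a b c : ℕ) (r : ℂ) :
    DX (monomial (e a b c) r) = monomial (e (a - 1) b (c + 1)) (r * a) := by
  rw [DX, pderiv_monomial, X2_eq, monomial_mul, one_mul]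
  rw [show ((e a b c) 0 : ℂ) = a by rw [e_apply0]]
  rw [esub0]

lemma DY_mon (a b c : ℕ) (r : ℂ) :
    DY (monomial (e a b c) r) = monomial (e a (b - 1) (c + 1)) (r * b) := by
  rw [DY, pderiv_monomial, X2_eq, monomial_mul, one_mul]
  rw [show ((e a b c) 1 : ℂ) = b by rw [e_apply1]]
  rw [esub1]

lemma nat_df (n k : ℕ) : n * (n - 1).descFactorial k = n.descFactorial (k + 1) := by
  cases n with
  | zero => simp
  | succ m => simpa using (Nat.succ_descFactorial_succ m k).symm

lemma applyOps_cons (x : Bool) (L : List Bool) (f : MvPolynomial (Fin 3) ℂ) :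
    applyOps (x :: L) f = applyOps L (if x then DX f else DY f) := rfl

lemma applyOps_mon : ∀ (L : List Bool) (a b c : ℕ) (r : ℂ),
    applyOps L (monomial (e a b c) r)
      = monomial (e (a - L.count true) (b - L.count false) (c + L.length))
          (r * ((a.descFactorial (L.count true) : ℂ) * (b.descFactorial (L.count false) : ℂ)))
  | [], a, b, c, r => by simp [applyOps]
  | (true :: L), a, b, c, r => by
    rw [applyOps_cons, if_pos rfl, DX_mon, applyOps_mon L]
    have hct : (true :: L).count true = L.count true + 1 := by simp
    have hcf : (true :: L).count false = L.count false := by simp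
    rw [hct, hcf]
    rw [show a - 1 - L.count true = a - (L.count true + 1) by omega,
        show c + 1 + L.length = c + (true :: L).length by simp; omega]
    congr 1
    have : (a : ℂ) * ((a - 1).descFactorial (L.count true) : ℂ)
        = (a.descFactorial (L.count true + 1) : ℂ) := by
      rw [← Nat.cast_mul, nat_df]
    push_cast at this ⊢
    rw [← this]; ring
  | (false :: L), a, b, c, r => by
    rw [applyOps_cons, if_neg (by simp), DY_mon, applyOps_mon L]
    have hct : (false :: L).count true = L.count true := by simp
    have hcf : (false :: L).count false = L.count false + 1 := by simp
    rw [hct, hcf]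
    rw [show b - 1 - L.count false = b - (L.count false + 1) by omega,
        show c + 1 + L.length = c + (false :: L).length by simp; omega]
    congr 1
    have : (b : ℂ) * ((b - 1).descFactorial (L.count false) : ℂ)
        = (b.descFactorial (L.count false + 1) : ℂ) := by
      rw [← Nat.cast_mul, nat_df]
    push_cast at this ⊢
    rw [← this]; ring

lemma applyOps_add : ∀ (L : List Bool) (f g : MvPolynomial (Fin 3) ℂ),
    applyOps L (f + g) = applyOps L f + applyOps L g
  | [], f, g => rfl
  | (x :: L), f, g => by
    rw [applyOps_cons, applyOps_cons, applyOps_cons]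
    rw [show (if x then DX (f + g) else DY (f + g))
        = (if x then DX f else DY f) + (if x then DX g else DY g) by
      cases x <;> simp [DX, DY, mul_add]]
    exact applyOps_add L _ _

lemma applyOps_smul : ∀ (L : List Bool) (c : ℂ) (f : MvPolynomial (Fin 3) ℂ),
    applyOps L (c • f) = c • applyOps L f
  | [], c, f => rfl
  | (x :: L), c, f => by
    rw [applyOps_cons, applyOps_cons]
    rw [show (if x then DX (c • f) else DY (c • f))
        = c • (if x then DX f else DY f) by
      cases x <;> simp [DX, DY, mul_smul_comm]]
    exact applyOps_smul L _ _

/-- `applyOps L` as a linear map. -/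
noncomputable def LM (L : List Bool) :
    MvPolynomial (Fin 3) ℂ →ₗ[ℂ] MvPolynomial (Fin 3) ℂ where
  toFun := applyOps L
  map_add' := applyOps_add L
  map_smul' := applyOps_smul L

lemma count_sum : ∀ (L : List Bool), L.count true + L.count false = L.length
  | [] => rfl
  | (x :: L) => by
    have := count_sum L
    cases x <;> simp [List.count_cons] <;> omega

end SocleAux

open SocleAux

/-- An element `f ∈ R_d` is annihilated by every composition of `i + 1` operators, each
equal to `D_X` or `D_Y`, if and only if `f` lies in the span of the monomials
`X^a Y^b Z^(3d-a-b)` with `0 ≤ a, b ≤ 2d` and `a + b ≤ min {i, 3d}`. -/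
theorem socle_i_of_blowup (d i : ℕ) (hd : 1 ≤ d) (f : MvPolynomial (Fin 3) ℂ)
    (hf : f ∈ Rd d) :
    (∀ L : List Bool, L.length = i + 1 → applyOps L f = 0) ↔
      f ∈ Submodule.span ℂ
        {m | ∃ a b : ℕ, a ≤ 2 * d ∧ b ≤ 2 * d ∧ a + b ≤ min i (3 * d) ∧
          m = X 0 ^ a * X 1 ^ b * X 2 ^ (3 * d - a - b)} := by
  constructor
  · intro h
    have hsupp : ∀ m ∈ f.support, ∃ a b : ℕ, a ≤ 2 * d ∧ b ≤ 2 * d ∧ a + b ≤ 3 * d ∧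
        m = e a b (3 * d - a - b) := by
      refine Submodule.span_induction
        (p := fun g _ => ∀ m ∈ g.support, ∃ a b : ℕ, a ≤ 2 * d ∧ b ≤ 2 * d ∧
          a + b ≤ 3 * d ∧ m = e a b (3 * d - a - b)) ?_ ?_ ?_ ?_ hf
      · rintro x ⟨a, b, ha, hb, hab, rfl⟩ m hm
        rw [Xpow, support_monomial, if_neg one_ne_zero, Finset.mem_singleton] at hm
        exact ⟨a, b, ha, hb, hab, hm⟩
      · simp
      · intro x y hx hy ihx ihy m hm
        rcases Finset.mem_union.1 (support_add hm) with h' | h'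
        exacts [ihx m h', ihy m h']
      · intro c x hx ihx m hm
        exact ihx m (support_smul hm)
    have hvanish : ∀ a b : ℕ, a ≤ 2 * d → b ≤ 2 * d → a + b ≤ 3 * d → i < a + b →
        coeff (e a b (3 * d - a - b)) f = 0 := by
      intro a b ha hb hab hi
      by_cases hmem : e a b (3 * d - a - b) ∈ f.support
      swap
      · exact notMem_support_iff.1 hmem
      set k := min a (i + 1) with hkdef
      set l := i + 1 - k with hldef
      have hka : k ≤ a := min_le_left _ _
      have hlb : l ≤ b := by omega
      set L : List Bool := List.replicate k true ++ List.replicate l false with hLdef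
      have hct : L.count true = k := by
        simp [hLdef, List.count_append, List.count_replicate]
      have hcf : L.count false = l := by
        simp [hLdef, List.count_append, List.count_replicate]
      have hlen : L.length = i + 1 := by
        simp [hLdef]; omega
      have h0 : applyOps L f = 0 := h L hlen
      have hsum : applyOps L f = ∑ v ∈ f.support, applyOps L (monomial v (coeff v f)) := by
        conv_lhs => rw [f.as_sum]
        exact map_sum (LM L) _ _
      set t := e (a - k) (b - l) ((3 * d - a - b) + L.length) with ht
      have key : coeff t (applyOps L f)
          = coeff (e a b (3 * d - a - b)) f
              * ((a.descFactorial k : ℂ) * (b.descFactorial l : ℂ)) := by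
        rw [hsum, coeff_sum]
        rw [Finset.sum_eq_single_of_mem (e a b (3 * d - a - b)) hmem ?other]
        · rw [applyOps_mon, hct, hcf, coeff_monomial, if_pos ht.symm]
        case other =>
          intro v hv hne
          obtain ⟨a', b', ha', hb', hab', rfl⟩ := hsupp v hv
          by_cases hka' : k ≤ a'
          · by_cases hlb' : l ≤ b'
            · have hcond : ¬ (e (a' - k) (b' - l) ((3 * d - a' - b') + L.length) = t) := by
                intro heq
                rw [ht] at heq
                have h0' := DFunLike.congr_fun heq (0 : Fin 3)
                have h1' := DFunLike.congr_fun heq (1 : Fin 3)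
                rw [e_apply0, e_apply0] at h0'
                rw [e_apply1, e_apply1] at h1'
                have ha'' : a' = a := by omega
                have hb'' : b' = b := by omega
                rw [ha'', hb''] at hne
                exact hne rfl
              rw [applyOps_mon, hct, hcf, coeff_monomial, if_neg hcond]
            · have hz : b'.descFactorial l = 0 :=
                Nat.descFactorial_eq_zero_iff_lt.2 (by omega)
              rw [applyOps_mon, hct, hcf, hz]
              simp
          · have hz : a'.descFactorial k = 0 :=
              Nat.descFactorial_eq_zero_iff_lt.2 (by omega)
            rw [applyOps_mon, hct, hcf, hz]
            simp
      rw [h0, coeff_zero] at key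
      have hdf : ((a.descFactorial k : ℂ) * (b.descFactorial l : ℂ)) ≠ 0 := by
        refine mul_ne_zero (Nat.cast_ne_zero.2 ?_) (Nat.cast_ne_zero.2 ?_) <;>
          · rw [Ne, Nat.descFactorial_eq_zero_iff_lt]; omega
      exact (mul_eq_zero.1 key.symm).resolve_right hdf
    rw [f.as_sum]
    apply Submodule.sum_mem
    intro v hv
    obtain ⟨a, b, ha, hb, hab, rfl⟩ := hsupp v hv
    have hco : coeff (e a b (3 * d - a - b)) f ≠ 0 := mem_support_iff.1 hv
    have hABi : a + b ≤ i := by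
      by_contra hgt
      exact hco (hvanish a b ha hb hab (by omega))
    have hrw : (monomial (e a b (3 * d - a - b))) (coeff (e a b (3 * d - a - b)) f)
        = coeff (e a b (3 * d - a - b)) f
            • (X 0 ^ a * X 1 ^ b * X 2 ^ (3 * d - a - b) : MvPolynomial (Fin 3) ℂ) := by
      rw [Xpow, smul_monomial, smul_eq_mul, mul_one]
    rw [hrw]
    exact Submodule.smul_mem _ _
      (Submodule.subset_span ⟨a, b, ha, hb, by omega, rfl⟩)
  · intro h L hL
    have hker : Submodule.span ℂ
        {m | ∃ a b : ℕ, a ≤ 2 * d ∧ b ≤ 2 * d ∧ a + b ≤ min i (3 * d) ∧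
          m = X 0 ^ a * X 1 ^ b * X 2 ^ (3 * d - a - b)} ≤ LinearMap.ker (LM L) := by
      rw [Submodule.span_le]
      rintro x ⟨a, b, ha, hb, hab, rfl⟩
      simp only [SetLike.mem_coe, LinearMap.mem_ker]
      show applyOps L (X 0 ^ a * X 1 ^ b * X 2 ^ (3 * d - a - b)) = 0
      rw [Xpow, applyOps_mon]
      have hcs := count_sum L
      rw [hL] at hcs
      have : a.descFactorial (L.count true) = 0 ∨ b.descFactorial (L.count false) = 0 := by
        rcases (show a < L.count true ∨ b < L.count false by omega) with h' | h'
        · exact Or.inl (Nat.descFactorial_eq_zero_iff_lt.2 h')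
        · exact Or.inr (Nat.descFactorial_eq_zero_iff_lt.2 h')
      rcases this with h' | h' <;> rw [h'] <;> simp
    exact LinearMap.mem_ker.1 (hker h)
end
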